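/- arXiv:0904.2447 — 2 statements merged into one kernel-verified Lean document; each statement's English description precedes it below -/
import Mathlib

section
/- Let n ≥ 4 and M = S_n(Alt_n). Then the element z^2 = (a_1a_2⋯a_n)^2 is central in M. -/
/-- The defining relation of `Sₙ(H)`: the word `a₁a₂⋯aₙ` equals the word
`a_{σ(1)}a_{σ(2)}⋯a_{σ(n)}` for every `σ ∈ H`. -/
def SnRel (n : ℕ) (H : Set (Equiv.Perm (Fin n))) :
    FreeMonoid (Fin n) → FreeMonoid (Fin n) → Prop := fun x y =>
  ∃ σ ∈ H, x = FreeMonoid.ofList (List.ofFn (fun i : Fin n => i)) ∧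
    y = FreeMonoid.ofList (List.ofFn (fun i : Fin n => σ i))

/-- The congruence generated by the defining relations. -/
def SnCon (n : ℕ) (H : Set (Equiv.Perm (Fin n))) : Con (FreeMonoid (Fin n)) :=
  conGen (SnRel n H)

/-- The monoid `Sₙ(H) = ⟨a₁,…,aₙ ∣ a₁a₂⋯aₙ = a_{σ(1)}⋯a_{σ(n)}, σ ∈ H⟩`. -/
abbrev Sn (n : ℕ) (H : Set (Equiv.Perm (Fin n))) : Type := (SnCon n H).Quotient

/-- The generator `aᵢ` of `Sₙ(H)`. -/
def gen (n : ℕ) (H : Set (Equiv.Perm (Fin n))) (i : Fin n) : Sn n H :=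
  (SnCon n H).mk' (FreeMonoid.of i)

/-- The element `z = a₁a₂⋯aₙ` of `Sₙ(H)`. -/
def zel (n : ℕ) (H : Set (Equiv.Perm (Fin n))) : Sn n H :=
  (SnCon n H).mk' (FreeMonoid.ofList (List.ofFn (fun i : Fin n => i)))

/-- The set of even permutations of `{1,…,n}`. -/
def AltH (n : ℕ) : Set (Equiv.Perm (Fin n)) := ↑(alternatingGroup (Fin n))

/-- The monoid `Sₙ(Altₙ)`. -/
abbrev SAlt (n : ℕ) : Type := Sn n (AltH n)

/-- The generator `aᵢ` of `Sₙ(Altₙ)`. -/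
def a (n : ℕ) (i : Fin n) : SAlt n := gen n (AltH n) i

/-- The element `z = a₁⋯aₙ` of `Sₙ(Altₙ)`. -/
def z (n : ℕ) : SAlt n := zel n (AltH n)

/-!
An even permutation `τ` of the letters induces an endomorphism `aᵢ ↦ a_{τ(i)}` of
`Sₙ(Altₙ)` fixing `z`, because it maps every defining word `a_{σ(1)}⋯a_{σ(n)}` to the
defining word of `τσ`. Since `Altₙ` is transitive, it suffices that `z²` commutes with a
single generator.

For odd `n` the `n`-cycle is even, so `aₙ z = (aₙ a₁ ⋯ aₙ₋₁) aₙ = z aₙ`. For even `n ≥ 6`,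
rewriting the window `a₃ ⋯ aₙ a₁ a₂` in the middle of `z²` as `a₄ a₃ a₅ ⋯ aₙ a₂ a₁`
gives `z² = u v` with `u = a₁a₂a₄a₃a₅⋯aₙ` and `v = a₂a₁a₃⋯aₙ`, both odd arrangements
ending in `aₙ`; moving `aₙ` to the front of such a word yields an even arrangement, so
`aₙ u v = z aₙ v = z² aₙ`. For `n = 4` an explicit chain of seven defining relations
shows that `a₂` commutes with `z²`.

In the code the letters are indexed from `0`, so `aᵢ` is `a n (i - 1)`.
-/

open Equiv

theorem List.ofFn_comp_finRotate {α : Type*} {m : ℕ} (f : Fin (m + 1) → α) :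
    List.ofFn (f ∘ finRotate (m + 1)) = (List.ofFn f).rotate 1 := by
  have hsnoc : f ∘ finRotate (m + 1) = Fin.snoc (Fin.tail f) (f 0) := by
    rw [Fin.snoc_eq_cons_rotate, Fin.cons_self_tail]; rfl
  rw [hsnoc, List.ofFn_succ', List.ofFn_succ]
  simp [Fin.tail]

namespace Sn

variable {n : ℕ}

def ofList (H : Set (Perm (Fin n))) (l : List (Fin n)) : Sn n H :=
  (SnCon n H).mk' (FreeMonoid.ofList l)

section

variable (H : Set (Perm (Fin n)))

theorem ofList_append (l₁ l₂ : List (Fin n)) :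
    ofList H (l₁ ++ l₂) = ofList H l₁ * ofList H l₂ :=
  map_mul _ _ _

theorem ofList_singleton (i : Fin n) : ofList H [i] = gen n H i := rfl

theorem ofList_ofFn_eq_zel {σ : Perm (Fin n)} (hσ : σ ∈ H) :
    ofList H (List.ofFn σ) = zel n H :=
  ((Con.eq _).2 (ConGen.Rel.of _ _ ⟨σ, hσ, rfl, rfl⟩)).symm

theorem ofList_append_ofFn_append {p q : Perm (Fin n)} (hp : p ∈ H) (hq : q ∈ H)
    (u v : List (Fin n)) :
    ofList H (u ++ List.ofFn p ++ v) = ofList H (u ++ List.ofFn q ++ v) := by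
  simp only [ofList_append, ofList_ofFn_eq_zel H hp, ofList_ofFn_eq_zel H hq]

theorem ofList_eq_of_window (k : ℕ) {l l' : List (Fin n)} (htake : l.take k = l'.take k)
    (hdrop : l.drop (k + n) = l'.drop (k + n))
    (hl : ∃ p ∈ H, List.ofFn p = (l.drop k).take n)
    (hl' : ∃ q ∈ H, List.ofFn q = (l'.drop k).take n) :
    ofList H l = ofList H l' := by
  obtain ⟨p, hp, hpl⟩ := hl
  obtain ⟨q, hq, hql⟩ := hl'
  have split : ∀ w : List (Fin n), w = w.take k ++ (w.drop k).take n ++ w.drop (k + n) := by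
    intro w
    rw [List.append_assoc, ← List.drop_drop, List.take_append_drop, List.take_append_drop]
  rw [split l, split l', ← hpl, ← hql, htake, hdrop]
  exact ofList_append_ofFn_append H hp hq _ _

theorem commute_of_forall_commute_gen {x : Sn n H} (h : ∀ i, Commute x (gen n H i))
    (y : Sn n H) : Commute x y := by
  induction y using Con.induction_on with
  | H w =>
    induction w using FreeMonoid.inductionOn' with
    | one => exact Commute.one_right x
    | of_mul i w ih =>
      rw [Con.coe_mul]
      exact (h i).mul_right ih

end

theorem gen_mul_ofList_ofFn {m : ℕ} (H : Set (Perm (Fin (m + 1)))) (σ : Perm (Fin (m + 1))) :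
    gen _ H (σ (Fin.last m)) * ofList H (List.ofFn σ) =
      ofList H (List.ofFn ⇑(σ * (finRotate (m + 1))⁻¹)) * gen _ H (σ (Fin.last m)) := by
  set τ := σ * (finRotate (m + 1))⁻¹
  have hσ : List.ofFn σ = (List.ofFn τ).rotate 1 := by
    rw [← List.ofFn_comp_finRotate, ← Perm.coe_mul, inv_mul_cancel_right]
  have hτ : τ 0 = σ (Fin.last m) := by
    change σ ((finRotate (m + 1)).symm 0) = σ (Fin.last m)
    rw [(finRotate (m + 1)).symm_apply_eq.2 finRotate_last.symm]
  rw [hσ, List.ofFn_succ, hτ, List.rotate_cons_succ, List.rotate_zero, ← ofList_singleton,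
    ← ofList_append, ← ofList_append]
  rfl

section Relabel

variable (H : Subgroup (Perm (Fin n)))

def relabel {τ : Perm (Fin n)} (hτ : τ ∈ H) : Sn n H →* Sn n H :=
  (SnCon n H).lift ((SnCon n H).mk'.comp (FreeMonoid.map τ)) <| Con.conGen_le.2 <| by
    rintro _ _ ⟨σ, hσ, rfl, rfl⟩
    rw [Con.ker_rel]
    change ofList H ((List.ofFn fun i => i).map τ) = ofList H ((List.ofFn σ).map τ)
    rw [List.map_ofFn, List.map_ofFn]
    exact (ofList_ofFn_eq_zel H (σ := τ) hτ).trans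
      (ofList_ofFn_eq_zel H (σ := τ * σ) (H.mul_mem hτ hσ)).symm

theorem relabel_gen {τ : Perm (Fin n)} (hτ : τ ∈ H) (i : Fin n) :
    relabel H hτ (gen n H i) = gen n H (τ i) := rfl

theorem relabel_zel {τ : Perm (Fin n)} (hτ : τ ∈ H) : relabel H hτ (zel n H) = zel n H := by
  change ofList H ((List.ofFn fun i => i).map τ) = zel n H
  rw [List.map_ofFn]
  exact ofList_ofFn_eq_zel (H : Set (Perm (Fin n))) hτ

end Relabel

end Sn

theorem mem_AltH_iff {n : ℕ} {σ : Perm (Fin n)} : σ ∈ AltH n ↔ Perm.sign σ = 1 :=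
  Perm.mem_alternatingGroup

theorem commute_z_pow_a_of_commute {n k : ℕ} (hn : 3 ≤ n) {i : Fin n}
    (h : Commute (z n ^ k) (a n i)) (j : Fin n) : Commute (z n ^ k) (a n j) := by
  have := alternatingGroup.isPretransitive_of_three_le_card (Fin n) (by simpa using hn)
  obtain ⟨τ, rfl⟩ := MulAction.exists_smul_eq (alternatingGroup (Fin n)) i j
  change Commute (zel n (alternatingGroup (Fin n)) ^ k) (gen n _ i) at h
  change Commute (zel n (alternatingGroup (Fin n)) ^ k) (gen n _ (τ.1 i))
  simpa only [map_pow, Sn.relabel_zel, Sn.relabel_gen] using h.map (Sn.relabel _ τ.2)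

theorem commute_z_a_last_of_odd {m : ℕ} (hodd : Odd (m + 1)) :
    Commute (z (m + 1)) (a (m + 1) (Fin.last m)) := by
  have hrot : (finRotate (m + 1))⁻¹ ∈ AltH (m + 1) := by
    rw [mem_AltH_iff, map_inv, sign_finRotate, (Nat.Odd.sub_odd hodd odd_one).neg_one_pow, inv_one]
  have := Sn.gen_mul_ofList_ofFn (AltH (m + 1)) 1
  rw [one_mul, Sn.ofList_ofFn_eq_zel _ hrot, Perm.one_apply,
    Sn.ofList_ofFn_eq_zel (AltH (m + 1)) (σ := 1) (one_mem (alternatingGroup _))] at this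
  exact this.symm

theorem exists_ofFn_id_eq_zero_cons_one_cons {m : ℕ} :
    ∃ t, (List.ofFn fun i : Fin (m + 2) => i) = 0 :: 1 :: t ∧ 0 ∉ t ∧ 1 ∉ t := by
  refine ⟨_, by rw [List.ofFn_succ, List.ofFn_succ, Fin.succ_zero_eq_one], ?_⟩
  have hnd := List.nodup_ofFn.2 fun (i j : Fin (m + 2)) => id
  rw [List.ofFn_succ, List.ofFn_succ, Fin.succ_zero_eq_one] at hnd
  simp only [List.nodup_cons, List.mem_cons, not_or] at hnd
  exact ⟨hnd.1.2, hnd.2.1⟩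

theorem z_sq_eq_ofList_swap_mul_ofList_swap {m : ℕ} :
    z (m + 4) ^ 2 = Sn.ofList (AltH (m + 4)) (List.ofFn ⇑(swap (2 : Fin (m + 4)) 3)) *
      Sn.ofList (AltH (m + 4)) (List.ofFn ⇑(swap (0 : Fin (m + 4)) 1)) := by
  set w := List.ofFn fun i : Fin (m + 4) => i
  obtain ⟨t, hw, ht0, ht1⟩ : ∃ t, w = 0 :: 1 :: t ∧ 0 ∉ t ∧ 1 ∉ t :=
    exists_ofFn_id_eq_zero_cons_one_cons
  have hmap : ∀ σ : Perm (Fin (m + 4)), List.ofFn σ = w.map σ := fun σ => by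
    rw [List.map_ofFn]; rfl
  have hne : (2 : Fin (m + 4)) ≠ 3 ∧ (0 : Fin (m + 4)) ≠ 1 := by
    simp [Fin.ext_iff, Nat.mod_eq_of_lt]
  have hfix23 : swap (2 : Fin (m + 4)) 3 0 = 0 ∧ swap (2 : Fin (m + 4)) 3 1 = 1 := by
    constructor <;> apply swap_apply_of_ne_of_ne <;> simp [Fin.ext_iff, Nat.mod_eq_of_lt]
  have hfix01 : ∀ x ∈ t, swap (0 : Fin (m + 4)) 1 x = x := fun x hx =>
    swap_apply_of_ne_of_ne (ne_of_mem_of_not_mem hx ht0) (ne_of_mem_of_not_mem hx ht1)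
  set ρ := finRotate (m + 4) * finRotate (m + 4)
  set τ : Perm (Fin (m + 4)) := swap 2 3 * swap 0 1
  have hρw : List.ofFn ⇑ρ = t ++ [0, 1] := by
    rw [Perm.coe_mul, List.ofFn_comp_finRotate, show (List.ofFn ⇑(finRotate (m + 4))) = w.rotate 1
      from List.ofFn_comp_finRotate (m := m + 3) fun i => i, List.rotate_rotate, hw]
    simp
  have hρ : ρ ∈ AltH (m + 4) := by
    rw [mem_AltH_iff, map_mul, Int.units_mul_self]
  have hτρ : τ * ρ ∈ AltH (m + 4) := by
    rw [mem_AltH_iff, map_mul, map_mul, Perm.sign_swap hne.1, Perm.sign_swap hne.2,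
      mem_AltH_iff.1 hρ]
    rfl
  -- the middle window `2 3 ⋯ 0 1` of `z²` is replaced by its image under `τ = (2 3)(0 1)`
  calc z (m + 4) ^ 2 = Sn.ofList (AltH (m + 4)) ([0, 1] ++ List.ofFn ⇑ρ ++ t) := by
        rw [sq, hρw, show z (m + 4) = Sn.ofList _ w from rfl, ← Sn.ofList_append, hw]
        simp
    _ = Sn.ofList (AltH (m + 4)) ([0, 1] ++ List.ofFn ⇑(τ * ρ) ++ t) :=
        Sn.ofList_append_ofFn_append _ hρ hτρ _ _
    _ = _ := by
      rw [← Sn.ofList_append, Perm.coe_mul τ, ← List.map_ofFn, hρw, hmap, hmap, hw]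
      congr 1
      simp only [τ, Perm.coe_mul, List.map_cons, List.map_append, List.map_nil,
        Function.comp_apply, hfix23.1, hfix23.2, swap_apply_left, swap_apply_right,
        (List.map_congr_left hfix01).trans t.map_id']
      simpa using hfix01

theorem commute_z_sq_a_last_of_even {m : ℕ} (heven : Even (m + 5)) :
    Commute (z (m + 5) ^ 2) (a (m + 5) (Fin.last (m + 4))) := by
  set last := Fin.last (m + 4)
  have hrot : Perm.sign (finRotate (m + 5)) = -1 := by
    rw [sign_finRotate, (Nat.Even.sub_odd (by omega) heven odd_one).neg_one_pow]
  have shuttle : ∀ i j : Fin (m + 5), i ≠ j ∧ i ≠ last ∧ j ≠ last →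
      a (m + 5) last * Sn.ofList (AltH (m + 5)) (List.ofFn ⇑(swap i j)) =
        z (m + 5) * a (m + 5) last := by
    rintro i j ⟨hij, hi, hj⟩
    have hrot' : swap i j * (finRotate (m + 5))⁻¹ ∈ AltH (m + 5) := by
      rw [mem_AltH_iff, map_mul, map_inv, Perm.sign_swap hij, hrot]; rfl
    have := Sn.gen_mul_ofList_ofFn (AltH (m + 5)) (swap i j)
    rwa [swap_apply_of_ne_of_ne hi.symm hj.symm, Sn.ofList_ofFn_eq_zel _ hrot'] at this
  have h23 : (2 : Fin (m + 5)) ≠ 3 ∧ 2 ≠ last ∧ 3 ≠ last := by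
    simp [last, Fin.ext_iff, Nat.mod_eq_of_lt]
  have h01 : (0 : Fin (m + 5)) ≠ 1 ∧ 0 ≠ last ∧ 1 ≠ last := by
    simp [last, Fin.ext_iff, Nat.mod_eq_of_lt]
  symm
  calc a (m + 5) last * z (m + 5) ^ 2
      = a _ last * Sn.ofList _ (List.ofFn ⇑(swap (2 : Fin (m + 5)) 3)) *
          Sn.ofList _ (List.ofFn ⇑(swap (0 : Fin (m + 5)) 1)) := by
        rw [z_sq_eq_ofList_swap_mul_ofList_swap (m := m + 1), mul_assoc]
    _ = z _ * (a _ last * Sn.ofList _ (List.ofFn ⇑(swap (0 : Fin (m + 5)) 1))) := by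
        rw [shuttle 2 3 h23, mul_assoc]
    _ = z (m + 5) ^ 2 * a _ last := by
        rw [shuttle 0 1 h01, ← mul_assoc, sq]

theorem commute_z_sq_a_one_four : Commute (z 4 ^ 2) (a 4 1) := by
  have window : ∀ (k : ℕ) {l l' : List (Fin 4)},
      l.take k = l'.take k ∧ l.drop (k + 4) = l'.drop (k + 4) ∧
        (∃ p : Perm (Fin 4), Perm.sign p = 1 ∧ List.ofFn p = (l.drop k).take 4) ∧
        (∃ q : Perm (Fin 4), Perm.sign q = 1 ∧ List.ofFn q = (l'.drop k).take 4) →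
      Sn.ofList (AltH 4) l = Sn.ofList (AltH 4) l' :=
    fun k _ _ ⟨htake, hdrop, ⟨p, hp, hpl⟩, ⟨q, hq, hql⟩⟩ =>
      Sn.ofList_eq_of_window _ k htake hdrop ⟨p, mem_AltH_iff.2 hp, hpl⟩
        ⟨q, mem_AltH_iff.2 hq, hql⟩
  symm
  calc a 4 1 * z 4 ^ 2
      = Sn.ofList (AltH 4) [1, 0, 1, 2, 3, 0, 1, 2, 3] := rfl
    _ = Sn.ofList (AltH 4) [1, 0, 3, 1, 2, 0, 1, 2, 3] := window 1 (by decide)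
    _ = Sn.ofList (AltH 4) [1, 0, 3, 1, 2, 0, 3, 1, 2] := window 5 (by decide)
    _ = Sn.ofList (AltH 4) [1, 0, 3, 2, 0, 1, 3, 1, 2] := window 3 (by decide)
    _ = Sn.ofList (AltH 4) [0, 1, 2, 3, 0, 1, 3, 1, 2] := window 0 (by decide)
    _ = Sn.ofList (AltH 4) [0, 1, 3, 2, 1, 0, 3, 1, 2] := window 2 (by decide)
    _ = Sn.ofList (AltH 4) [0, 1, 3, 2, 1, 0, 2, 3, 1] := window 5 (by decide)
    _ = Sn.ofList (AltH 4) [0, 1, 2, 3, 0, 1, 2, 3, 1] := window 2 (by decide)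
    _ = z 4 ^ 2 * a 4 1 := rfl

/-- in `M = Sₙ(Altₙ)` with `n ≥ 4`, `z² = (a₁a₂⋯aₙ)²` is central. -/
theorem stmt7 (n : ℕ) (hn : 4 ≤ n) (x : SAlt n) :
    (z n) ^ 2 * x = x * (z n) ^ 2 := by
  obtain ⟨i, hi⟩ : ∃ i, Commute (z n ^ 2) (a n i) := by
    obtain rfl | h5 := hn.eq_or_lt
    · exact ⟨1, commute_z_sq_a_one_four⟩
    obtain heven | hodd := Nat.even_or_odd n
    · obtain ⟨m, rfl⟩ : ∃ m, n = m + 5 := ⟨n - 5, by omega⟩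
      exact ⟨_, commute_z_sq_a_last_of_even heven⟩
    · obtain ⟨m, rfl⟩ : ∃ m, n = m + 1 := ⟨n - 1, by omega⟩
      exact ⟨_, (commute_z_a_last_of_odd hodd).pow_left 2⟩
  exact (Sn.commute_of_forall_commute_gen _ (commute_z_pow_a_of_commute (by omega) hi) x).eq
end

section
/- Let n ≥ 4 and G = G_n(Alt_n). Let C = ⟨a_1a_2a_1^{-1}a_2^{-1}⟩ and D = ⟨a_i^2 : 1 ≤ i ≤ n⟩. Then D is a central subgroup of G and G/(CD) is isomorphic to (Z/2Z)^n. -/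
/-- The relator set of `Gₙ(Altₙ)`: the words `(a₁a₂⋯aₙ)(a_{σ(1)}⋯a_{σ(n)})⁻¹`
for all even permutations `σ`. -/
def GAltRels (n : ℕ) : Set (FreeGroup (Fin n)) :=
  { w | ∃ σ ∈ alternatingGroup (Fin n),
      w = (List.ofFn (fun i : Fin n => FreeGroup.of i)).prod *
        ((List.ofFn (fun i : Fin n => FreeGroup.of (σ i))).prod)⁻¹ }

/-- The group `Gₙ(Altₙ) = ⟨a₁,…,aₙ ∣ a₁a₂⋯aₙ = a_{σ(1)}⋯a_{σ(n)}, σ ∈ Altₙ⟩`. -/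
abbrev GAlt (n : ℕ) : Type := PresentedGroup (GAltRels n)

/-- The generator `aᵢ` of `Gₙ(Altₙ)`. -/
def b (n : ℕ) (i : Fin n) : GAlt n := PresentedGroup.of i

/-- The subgroup `C = ⟨a₁a₂a₁⁻¹a₂⁻¹⟩` of `Gₙ(Altₙ)`. -/
def Csub (n : ℕ) [NeZero n] : Subgroup (GAlt n) :=
  Subgroup.zpowers (b n 0 * b n 1 * (b n 0)⁻¹ * (b n 1)⁻¹)

/-- The subgroup `D = ⟨aᵢ² : 1 ≤ i ≤ n⟩` of `Gₙ(Altₙ)`. -/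
def Dsub (n : ℕ) : Subgroup (GAlt n) :=
  Subgroup.closure (Set.range fun i : Fin n => (b n i) ^ 2)

/-!
Two even permutations that differ only in the first four positions give equal words, so after
cancelling the common tail the relations permute three of the first four letters cyclically; a
fourth index absorbs the parity of the arrangement. Hence `aᵢ` commutes with `aⱼaₖ` for distinct
`i, j, k`. Writing `aₘ² = (aₘaⱼ)(aₗaⱼ)⁻¹(aₗaₘ)` shows that every `aₘ²` is central, and then
`[aᵢ, aⱼ] = [aᵢ, aₖ]`, so every commutator of two generators lies in `C`. Thus `G/CD` is generated
by `n` commuting involutions, and the map `aᵢ ↦ eᵢ` onto `(ℤ/2)ⁿ`, which kills `C` and `D`, is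
inverted by `eᵢ ↦ aᵢ`.
-/

open Equiv Equiv.Perm
open scoped commutatorElement

lemma Fin.exists_ne_of_four_le {n : ℕ} (hn : 4 ≤ n) (i j k : Fin n) :
    ∃ l, l ≠ i ∧ l ≠ j ∧ l ≠ k := by
  obtain ⟨l, -, hl⟩ := Finset.exists_mem_notMem_of_card_lt_card (s := {i, j, k})
    (t := Finset.univ) (by grind [Finset.card_le_three, Finset.card_univ, Fintype.card_fin])
  simp only [Finset.mem_insert, Finset.mem_singleton, not_or] at hl
  exact ⟨l, hl⟩

theorem PresentedGroup.mem_center_iff {α : Type*} {rels : Set (FreeGroup α)}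
    {g : PresentedGroup rels} :
    g ∈ Subgroup.center (PresentedGroup rels) ↔ ∀ a, Commute (of a) g := by
  rw [← Subgroup.centralizer_univ, ← Subgroup.coe_top, ← closure_range_of,
    Subgroup.centralizer_closure, Subgroup.mem_centralizer_iff, Set.forall_mem_range]
  rfl

theorem PresentedGroup.closure_range_mk_of {α : Type*} {rels : Set (FreeGroup α)}
    (N : Subgroup (PresentedGroup rels)) [N.Normal] :
    Subgroup.closure (Set.range (QuotientGroup.mk' N ∘ of)) = ⊤ := by
  rw [Set.range_comp, ← MonoidHom.map_closure, closure_range_of,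
    ← MonoidHom.range_eq_map, MonoidHom.range_eq_top]
  exact QuotientGroup.mk'_surjective N

theorem MonoidHom.bijective_of_map_eq_mulSingle {H ι : Type*} [Group H] [Fintype ι]
    [DecidableEq ι] (f : H →* (ι → Multiplicative (ZMod 2))) (x : ι → H)
    (hx : Subgroup.closure (Set.range x) = ⊤) (hsq : ∀ i, x i ^ 2 = 1)
    (hcomm : Pairwise fun i j => Commute (x i) (x j))
    (hf : ∀ i, f (x i) = Pi.mulSingle i (.ofAdd 1)) : Function.Bijective f := by
  have hZ2 : ∀ v : Multiplicative (ZMod 2), v = 1 ∨ v = .ofAdd 1 := by decide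
  let ψ (i : ι) : {g : ℤ →+ Additive H // g 2 = 0} :=
    ⟨zmultiplesHom _ (.ofMul (x i)), by simp [← ofMul_zpow, hsq]⟩
  let φ (i : ι) : Multiplicative (ZMod 2) →* H :=
    AddMonoidHom.toMultiplicativeLeft (ZMod.lift 2 (ψ i))
  have hφ (i : ι) : φ i (.ofAdd 1) = x i := by
    simpa [φ, ψ] using congrArg Additive.toMul (ZMod.lift_coe 2 (ψ i) 1)
  have hφcomm : Pairwise fun i j => ∀ v w, Commute (φ i v) (φ j w) := by
    intro i j hij v w
    rcases hZ2 v with rfl | rfl <;> rcases hZ2 w with rfl | rfl <;> simp [hφ, hcomm hij]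
  let g := MonoidHom.noncommPiCoprod φ hφcomm
  have hg (i : ι) (v) : g (Pi.mulSingle i v) = φ i v := MonoidHom.noncommPiCoprod_mulSingle φ i v
  have hfg : f.comp g = MonoidHom.id _ := by
    refine MonoidHom.functions_ext _ _ _ fun i v => ?_
    rcases hZ2 v with rfl | rfl <;> simp [hg, hφ, hf]
  have hgf : g.comp f = MonoidHom.id H := by
    refine MonoidHom.eq_of_eqOn_dense hx ?_
    rintro _ ⟨i, rfl⟩
    simp [hf, hg, hφ]
  exact Function.bijective_iff_has_inverse.2 ⟨g, DFunLike.congr_fun hgf, DFunLike.congr_fun hfg⟩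

lemma prod_ofFn_b_perm_eq {n : ℕ} {σ : Perm (Fin n)} (hσ : σ ∈ alternatingGroup (Fin n)) :
    (List.ofFn fun p => b n (σ p)).prod = (List.ofFn (b n)).prod := by
  have h := PresentedGroup.one_of_mem (rels := GAltRels n) ⟨σ, hσ, rfl⟩
  rw [map_mul, map_inv, mul_inv_eq_one, map_list_prod, map_list_prod, List.map_ofFn,
    List.map_ofFn] at h
  exact h.symm

-- `σ * (e ⊕ 1)` is even, and its word is that of `σ` with the first `k` letters permuted by `e`.
lemma prod_ofFn_b_castAdd_eq_of_sign_eq {k m : ℕ} (σ : Perm (Fin (k + m)))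
    {e e' : Perm (Fin k)} (he : sign e = sign σ) (he' : sign e' = sign σ) :
    (List.ofFn fun p => b (k + m) (σ (Fin.castAdd m (e p)))).prod =
      (List.ofFn fun p => b (k + m) (σ (Fin.castAdd m (e' p)))).prod := by
  have hword : ∀ e : Perm (Fin k), sign e = sign σ →
      (List.ofFn fun p => b (k + m) (σ (Fin.castAdd m (e p)))).prod *
        (List.ofFn fun q => b (k + m) (σ (Fin.natAdd k q))).prod =
      (List.ofFn (b (k + m))).prod := by
    intro e he
    have hmem : σ * finSumFinEquiv.permCongr (e.sumCongr 1) ∈ alternatingGroup (Fin (k + m)) := by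
      rw [mem_alternatingGroup, map_mul, sign_permCongr, sign_sumCongr, he, Perm.sign_one,
        mul_one, Int.units_mul_self]
    rw [← prod_ofFn_b_perm_eq hmem, List.ofFn_add, List.prod_append]
    have hcast (p : Fin k) : Fin.castLE (Nat.le_add_right k m) p = Fin.castAdd m p := rfl
    simp only [hcast, Perm.mul_apply, permCongr_apply, finSumFinEquiv_symm_apply_castAdd,
      finSumFinEquiv_symm_apply_natAdd, Perm.sumCongr_apply, Sum.map_inl, Sum.map_inr,
      finSumFinEquiv_apply_left, finSumFinEquiv_apply_right, Perm.one_apply]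
  exact mul_right_cancel ((hword e he).trans (hword e' he').symm)

lemma commute_b_b_mul_b {n : ℕ} (hn : 4 ≤ n) {i j k : Fin n} (hij : i ≠ j) (hik : i ≠ k)
    (hjk : j ≠ k) : Commute (b n i) (b n j * b n k) := by
  obtain ⟨l, hli, hlj, hlk⟩ := Fin.exists_ne_of_four_le hn i j k
  obtain ⟨m, rfl⟩ := Nat.exists_eq_add_of_le hn
  obtain ⟨σ, hσ⟩ := Perm.exists_extending_pair (Fin.castAdd m) ![i, j, k, l]
    (Fin.castAdd_injective _ _) (by
      intro p q h; fin_cases p <;> fin_cases q <;> simp_all [eq_comm])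
  rw [commute_iff_eq]
  -- The prefixes compared are `ijkl = jkil` if `σ` is even and `ljki = lijk` if it is odd.
  rcases Int.units_eq_one_or (sign σ) with hσ1 | hσ1
  · have h := prod_ofFn_b_castAdd_eq_of_sign_eq σ (e := 1) (e' := swap 0 1 * swap 1 2)
      (by simp [hσ1]) (by simp [hσ1])
    refine mul_right_cancel (b := b _ l) ?_
    simpa [List.ofFn_succ, hσ, swap_apply_def, mul_assoc] using h
  · have h := prod_ofFn_b_castAdd_eq_of_sign_eq σ (e := swap 0 3)
      (e' := swap 0 3 * swap 1 3 * swap 2 3) (by simp [hσ1]) (by simp [hσ1])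
    refine mul_left_cancel (a := b _ l) ?_
    simpa [List.ofFn_succ, hσ, swap_apply_def, mul_assoc] using h.symm

lemma commute_b_b_sq {n : ℕ} (hn : 4 ≤ n) (i m : Fin n) : Commute (b n i) (b n m ^ 2) := by
  rcases eq_or_ne i m with rfl | him
  · exact (Commute.refl _).pow_right 2
  obtain ⟨j, hji, hjm, -⟩ := Fin.exists_ne_of_four_le hn i m m
  obtain ⟨l, hli, hlm, hlj⟩ := Fin.exists_ne_of_four_le hn i m j
  have hsq : b n m ^ 2 = (b n m * b n j) * ((b n l * b n j)⁻¹ * (b n l * b n m)) := by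
    rw [pow_two]; group
  rw [hsq]
  exact (commute_b_b_mul_b hn him hji.symm hjm.symm).mul_right
    ((commute_b_b_mul_b hn hli.symm hji.symm hlj).inv_right.mul_right
      (commute_b_b_mul_b hn hli.symm him hlm))

lemma b_sq_mem_center {n : ℕ} (hn : 4 ≤ n) (m : Fin n) :
    b n m ^ 2 ∈ Subgroup.center (GAlt n) :=
  PresentedGroup.mem_center_iff.2 fun i => commute_b_b_sq hn i m

lemma commutatorElement_b_eq {n : ℕ} (hn : 4 ≤ n) {i j k : Fin n} (hij : i ≠ j) (hik : i ≠ k)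
    (hjk : j ≠ k) : ⁅b n i, b n j⁆ = ⁅b n i, b n k⁆ := by
  have h : Commute (b n i)⁻¹ ((b n k)⁻¹ * b n j) := by
    rw [show (b n k)⁻¹ * b n j = (b n k ^ 2)⁻¹ * (b n k * b n j) by group]
    exact ((commute_b_b_sq hn i k).inv_right.mul_right
      (commute_b_b_mul_b hn hik hij hjk.symm)).inv_left
  calc ⁅b n i, b n j⁆ = b n i * b n k * (((b n k)⁻¹ * b n j) * (b n i)⁻¹) * (b n j)⁻¹ := by
        rw [commutatorElement_def]; group
    _ = b n i * b n k * ((b n i)⁻¹ * ((b n k)⁻¹ * b n j)) * (b n j)⁻¹ := by rw [h.eq]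
    _ = ⁅b n i, b n k⁆ := by rw [commutatorElement_def]; group

lemma commutatorElement_b_mem_Csub {n : ℕ} [NeZero n] (hn : 4 ≤ n) {i j : Fin n}
    (hij : i ≠ j) : ⁅b n i, b n j⁆ ∈ Csub n := by
  have h01 : (0 : Fin n) ≠ 1 := by
    rw [Ne, Fin.ext_iff, Fin.val_zero, Fin.val_one', Nat.mod_eq_of_lt (by omega)]
    omega
  have hmove {i j k : Fin n} (hij : i ≠ j) (hik : i ≠ k) :
      ⁅b n i, b n j⁆ ∈ Csub n ↔ ⁅b n i, b n k⁆ ∈ Csub n := by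
    rcases eq_or_ne j k with rfl | hjk
    · rfl
    · rw [commutatorElement_b_eq hn hij hik hjk]
  have hswap (i j : Fin n) : ⁅b n i, b n j⁆ ∈ Csub n ↔ ⁅b n j, b n i⁆ ∈ Csub n := by
    rw [← commutatorElement_inv, inv_mem_iff]
  have h0 {j : Fin n} (hj : (0 : Fin n) ≠ j) : ⁅b n 0, b n j⁆ ∈ Csub n :=
    (hmove h01 hj).1 (Subgroup.mem_zpowers _)
  rcases eq_or_ne i 0 with rfl | hi
  · exact h0 hij
  · exact (hmove hi hij).1 ((hswap _ _).2 (h0 hi.symm))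

lemma GAltRels_lift_eq_one {n : ℕ} {A : Type*} [CommGroup A] (f : Fin n → A) :
    ∀ r ∈ GAltRels n, FreeGroup.lift f r = 1 := by
  rintro _ ⟨σ, -, rfl⟩
  simp only [map_mul, map_inv, map_list_prod, List.map_ofFn, Function.comp_def,
    FreeGroup.lift_apply_of, List.prod_ofFn, Equiv.prod_comp σ f, mul_inv_cancel]

lemma Csub_le_ker {n : ℕ} [NeZero n] {A : Type*} [CommGroup A] (φ : GAlt n →* A) :
    Csub n ≤ φ.ker := by
  rw [Csub, Subgroup.zpowers_le, MonoidHom.mem_ker, ← commutatorElement_def,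
    map_commutatorElement, commutatorElement_eq_one_iff_commute]
  exact Commute.all _ _

lemma Dsub_le_ker {n : ℕ} {A : Type*} [Group A] (φ : GAlt n →* A)
    (hφ : ∀ i, φ (b n i) ^ 2 = 1) : Dsub n ≤ φ.ker := by
  rw [Dsub, Subgroup.closure_le]
  rintro _ ⟨i, rfl⟩
  simp [hφ]

/-- in `G = Gₙ(Altₙ)` with `n ≥ 4`, the subgroup `D = ⟨aᵢ²⟩` is
central and `G/(CD) ≅ (ℤ/2ℤ)ⁿ`. -/
theorem stmt17 (n : ℕ) (hn : 4 ≤ n) [NeZero n] :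
    Dsub n ≤ Subgroup.center (GAlt n) ∧
    ∀ [inst : (Csub n ⊔ Dsub n).Normal],
      Nonempty ((GAlt n ⧸ (Csub n ⊔ Dsub n)) ≃* (Fin n → Multiplicative (ZMod 2))) := by
  refine ⟨(Subgroup.closure_le _).2 (Set.range_subset_iff.2 (b_sq_mem_center hn)), fun {_} => ?_⟩
  set N := Csub n ⊔ Dsub n
  let e (i : Fin n) : Fin n → Multiplicative (ZMod 2) := Pi.mulSingle i (.ofAdd 1)
  let π : GAlt n →* (Fin n → Multiplicative (ZMod 2)) :=
    PresentedGroup.toGroup (GAltRels_lift_eq_one e)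
  have hπ (i : Fin n) : π (b n i) = e i := PresentedGroup.toGroup.of _
  have hN : N ≤ π.ker := sup_le (Csub_le_ker π) (Dsub_le_ker π fun i => by
    rw [hπ, ← Pi.mulSingle_pow, show Multiplicative.ofAdd (1 : ZMod 2) ^ 2 = 1 from rfl,
      Pi.mulSingle_one])
  let x (i : Fin n) : GAlt n ⧸ N := b n i
  refine ⟨MulEquiv.ofBijective (QuotientGroup.lift N π hN)
    (MonoidHom.bijective_of_map_eq_mulSingle _ x (PresentedGroup.closure_range_mk_of N) ?_ ?_ hπ)⟩
  · intro i
    rw [← QuotientGroup.mk_pow, QuotientGroup.eq_one_iff]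
    exact Subgroup.mem_sup_right (Subgroup.subset_closure ⟨i, rfl⟩)
  · intro i j hij
    rw [← commutatorElement_eq_one_iff_commute]
    exact (QuotientGroup.eq_one_iff _).2
      (Subgroup.mem_sup_left (commutatorElement_b_mem_Csub hn hij))
end
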